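/- arXiv:2512.20391 — 2 statements merged into one kernel-verified Lean document; each statement's English description precedes it below -/
import Mathlib

section
/- Let p_m, p_j ∈ ℝ³ with d = ‖p_j − p_m‖ ≥ 2ρ > 0, and let g = (p_j − p_m)/d. Define h_m = gᵀp_m + (d/2 − ρ) and h_j = (−g)ᵀp_j + (d/2 − ρ). If q_m, q_j ∈ ℝ³ satisfy gᵀq_m ≤ h_m and (−g)ᵀq_j ≤ h_j, then ‖q_j − q_m‖ ≥ 2ρ. -/
open RealInnerProductSpace

theorem bisecting_plane_separation (pm pj qm qj : EuclideanSpace ℝ (Fin 3)) (ρ : ℝ)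
    (hρ : 0 < ρ)
    (hd : 2 * ρ ≤ ‖pj - pm‖)
    (g : EuclideanSpace ℝ (Fin 3))
    (hg : g = (‖pj - pm‖)⁻¹ • (pj - pm))
    (hm : ⟪g, qm⟫ ≤ ⟪g, pm⟫ + (‖pj - pm‖ / 2 - ρ))
    (hj : ⟪-g, qj⟫ ≤ ⟪-g, pj⟫ + (‖pj - pm‖ / 2 - ρ)) :
    2 * ρ ≤ ‖qj - qm‖ := by
  set d := ‖pj - pm‖ with hdd
  have hdpos : 0 < d := lt_of_lt_of_le (by linarith) hd
  have hkey : ⟪g, pj⟫ - ⟪g, pm⟫ = d := by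
    rw [← inner_sub_right, hg, real_inner_smul_left, real_inner_self_eq_norm_sq]
    field_simp
    ring
  simp only [inner_neg_left, neg_le_neg_iff] at hj
  have h1 : 2 * ρ ≤ ⟪g, qj - qm⟫ := by
    rw [inner_sub_right]
    have := hj
    linarith [hj, hm, hkey]
  have hgnorm : ‖g‖ = 1 := by
    rw [hg, norm_smul]
    rw [norm_inv, Real.norm_eq_abs, abs_of_pos hdpos, ← hdd, inv_mul_cancel₀ hdpos.ne']
  calc 2 * ρ ≤ ⟪g, qj - qm⟫ := h1
    _ ≤ ‖g‖ * ‖qj - qm‖ := real_inner_le_norm _ _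
    _ = ‖qj - qm‖ := by rw [hgnorm, one_mul]
end

section
/- Let p_m, p_j, q_m, q_j ∈ ℝ³ and ρ > 0, with ‖p_j − p_m‖ ≥ 2ρ. With g = (p_j−p_m)/‖p_j−p_m‖ and the tightened bisecting-plane constraints gᵀq_m ≤ gᵀp_m + (‖p_j−p_m‖/2 − ρ) and gᵀq_j ≥ gᵀp_j − (‖p_j−p_m‖/2 − ρ), the open balls of radius ρ centered at q_m and q_j are disjoint. -/
open RealInnerProductSpace

theorem bisecting_plane_ball_disjoint (pm pj qm qj : EuclideanSpace ℝ (Fin 3)) (ρ : ℝ)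
    (hρ : 0 < ρ)
    (hd : 2 * ρ ≤ ‖pj - pm‖)
    (g : EuclideanSpace ℝ (Fin 3))
    (hg : g = (‖pj - pm‖)⁻¹ • (pj - pm))
    (hm : ⟪g, qm⟫ ≤ ⟪g, pm⟫ + (‖pj - pm‖ / 2 - ρ))
    (hj : ⟪g, qj⟫ ≥ ⟪g, pj⟫ - (‖pj - pm‖ / 2 - ρ)) :
    Disjoint (Metric.ball qm ρ) (Metric.ball qj ρ) := by
  have hdpos : (0:ℝ) < ‖pj - pm‖ := lt_of_lt_of_le (by linarith) hd
  apply Metric.ball_disjoint_ball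
  have hgp : ⟪g, pj - pm⟫ = ‖pj - pm‖ := by
    rw [hg, real_inner_smul_left, real_inner_self_eq_norm_sq]
    field_simp
  have hgn : ‖g‖ = 1 := by
    rw [hg, norm_smul, norm_inv, norm_norm]
    field_simp
  have h1 : (2:ℝ) * ρ ≤ ⟪g, qj - qm⟫ := by
    rw [inner_sub_right]
    have := inner_sub_right (𝕜 := ℝ) g pj pm
    linarith [hgp, this]
  have h2 : ⟪g, qj - qm⟫ ≤ ‖qj - qm‖ := by
    calc ⟪g, qj - qm⟫ ≤ ‖g‖ * ‖qj - qm‖ := real_inner_le_norm g (qj - qm)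
    _ = ‖qj - qm‖ := by rw [hgn, one_mul]
  have : dist qm qj = ‖qj - qm‖ := by rw [dist_comm, dist_eq_norm]
  linarith
end
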